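/- arXiv:1707.00049 — 7 statements merged into one kernel-verified Lean document; each statement's English description precedes it below -/
import Mathlib

section
/- There does not exist an odd integer n > 1 together with two positive divisors d1, d2 of (n^2+1)/2 such that d1 + d2 = n + 1. -/
/-!
Write `n = 2k + 1` and `N = (n² + 1)/2 = 2k² + 2k + 1`. Since `N - k(n + 1) = 1`, any two
divisors of `N` summing to `n + 1` are coprime, so `d₁ d₂ t = N` for some `t`, i.e.
`(d₁ + d₂ - 1)² + 1 = 2 t d₁ d₂`. Vieta jumping on this equation, viewed as a quadratic in the
larger variable, descends to a solution with `d₁ = d₂`, which forces `d₁ = t = 1`. For `t = 1`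
the equation reads `(d₁ - 1)² + (d₂ - 1)² = 0`, so `n = 1`.
-/

lemma IsCoprime.of_isCoprime_add_of_dvd {R : Type*} [CommRing R] {a b N : R}
    (h : IsCoprime (a + b) N) (ha : a ∣ N) : IsCoprime a b := by
  obtain ⟨u, v, huv⟩ := h
  obtain ⟨c, rfl⟩ := ha
  exact ⟨u + v * c, u, by linear_combination huv⟩

section VietaJumping

variable {t a b : ℤ}

/-- The other root `e = 2(ta - a + 1) - b = ((a - 1)² + 1)/b` of the quadratic in `b`. -/
lemma exists_smaller_solution_of_lt (ha : 0 < a) (hab : a < b)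
    (h : (a + b - 1) ^ 2 + 1 = 2 * t * a * b) :
    ∃ e, 0 < e ∧ e < b ∧ (a + e - 1) ^ 2 + 1 = 2 * t * a * e := by
  have hprod : b * (2 * (t * a - a + 1) - b) = (a - 1) ^ 2 + 1 := by linear_combination -h
  refine ⟨2 * (t * a - a + 1) - b, ?_, ?_, by linear_combination h⟩ <;>
    nlinarith [sq_nonneg (a - 1)]

lemma eq_one_of_diagonal_solution (ha : 0 < a) (h : (a + a - 1) ^ 2 + 1 = 2 * t * a * a) :
    t = 1 := by
  have ha_one : a = 1 := Int.eq_one_of_dvd_one ha.le ⟨2 + t * a - 2 * a, by linarith⟩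
  subst ha_one
  linarith

theorem eq_one_of_sq_add_one_eq {t a b : ℤ} (ha : 0 < a) (hb : 0 < b)
    (h : (a + b - 1) ^ 2 + 1 = 2 * t * a * b) : t = 1 := by
  rcases lt_trichotomy a b with hab | rfl | hba
  · obtain ⟨e, he, heb, h'⟩ := exists_smaller_solution_of_lt ha hab h
    exact eq_one_of_sq_add_one_eq ha he h'
  · exact eq_one_of_diagonal_solution ha h
  · obtain ⟨e, he, hea, h'⟩ := 
      exists_smaller_solution_of_lt (t := t) hb hba (by linear_combination h)
    exact eq_one_of_sq_add_one_eq hb he h'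
termination_by (a + b).toNat
decreasing_by all_goals omega

end VietaJumping

theorem no_divisor_pair_sum_n_add_one :
    ¬ ∃ (n d1 d2 : ℤ), 1 < n ∧ Odd n ∧ 0 < d1 ∧ 0 < d2 ∧
      d1 ∣ (n ^ 2 + 1) / 2 ∧ d2 ∣ (n ^ 2 + 1) / 2 ∧ d1 + d2 = n + 1 := by
  rintro ⟨n, d1, d2, hn, ⟨k, rfl⟩, h1, h2, hdvd1, hdvd2, hsum⟩
  have hN : ((2 * k + 1) ^ 2 + 1) / 2 = 2 * k ^ 2 + 2 * k + 1 := by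
    rw [Int.ediv_eq_iff_eq_mul_left two_ne_zero ⟨2 * k ^ 2 + 2 * k + 1, by ring⟩]
    ring
  rw [hN] at hdvd1 hdvd2
  have hcop : IsCoprime d1 d2 :=
    IsCoprime.of_isCoprime_add_of_dvd ⟨-k, 1, by rw [hsum]; ring⟩ hdvd1
  obtain ⟨t, ht⟩ := hcop.mul_dvd hdvd1 hdvd2
  have heq : (d1 + d2 - 1) ^ 2 + 1 = 2 * t * d1 * d2 := by
    linear_combination 2 * ht + (d1 + d2 + 2 * k) * hsum
  obtain rfl : t = 1 := eq_one_of_sq_add_one_eq h1 h2 heq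
  have hsq : (d1 - 1) ^ 2 + (d2 - 1) ^ 2 = 0 := by linear_combination heq
  nlinarith [sq_nonneg (d1 - 1), sq_nonneg (d2 - 1)]
end

section
/- For every even positive integer δ, there are infinitely many odd positive integers n for which there exist divisors d1, d2 > 1 of (n^2+1)/2 such that d1 + d2 = δ(n+1) + 2. -/
/-!
Write `δ = 2k`. For a solution of the Pell equation `x² - (4k² - 2) y² = 1` with `y > 0`, put
`n = 4(2k + 1) y² - 1`; then `k(n + 1) + 1 ± 2(2k + 1) x y` are two integers with sum
`δ(n + 1) + 2` and product `(n² + 1) / 2`, and both exceed `1` because `|x| < 2ky`.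
Since `4k² - 2` is not a square, the Pell equation has solutions with `y` arbitrarily large,
so `n` is unbounded.
-/

namespace Pell.Solution₁

theorem exists_lt_y {d : ℤ} (h₀ : 0 < d) (hd : ¬IsSquare d) (N : ℤ) :
    ∃ a : Solution₁ d, N < a.y := by
  obtain ⟨a, ha⟩ := IsFundamental.exists_of_not_isSquare h₀ hd
  obtain ⟨_, ⟨n, rfl⟩, hN⟩ :=
    not_bddAbove_iff.mp ha.y_strictMono.not_bddAbove_range_of_isSuccArchimedean N
  exact ⟨a ^ n, hN⟩

end Pell.Solution₁

theorem abs_lt_of_sq_sub_mul_sq_eq_one {k x y : ℤ} (hk : 0 < k) (hy : 0 < y)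
    (hxy : x ^ 2 - (4 * k ^ 2 - 2) * y ^ 2 = 1) : |x| < 2 * k * y := by
  refine abs_lt_of_sq_lt_sq ?_ (by positivity)
  nlinarith

theorem exists_factorization_of_sq_sub_mul_sq_eq_one {k n x y : ℤ} (hk : 0 < k) (hy : 0 < y)
    (hxy : x ^ 2 - (4 * k ^ 2 - 2) * y ^ 2 = 1) (hn : n + 1 = 4 * (2 * k + 1) * y ^ 2) :
    ∃ d₁ d₂ : ℤ, 1 < d₁ ∧ 1 < d₂ ∧ n ^ 2 + 1 = 2 * (d₁ * d₂) ∧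
      d₁ + d₂ = 2 * k * (n + 1) + 2 := by
  have hc : |2 * (2 * k + 1) * y * x| < k * (n + 1) :=
    calc |2 * (2 * k + 1) * y * x| = 2 * (2 * k + 1) * y * |x| := by
          rw [abs_mul, abs_of_pos (by positivity)]
      _ < 2 * (2 * k + 1) * y * (2 * k * y) := by
          gcongr; exact abs_lt_of_sq_sub_mul_sq_eq_one hk hy hxy
      _ = k * (n + 1) := by rw [hn]; ring
  obtain ⟨hc₁, hc₂⟩ := abs_lt.mp hc
  refine ⟨k * (n + 1) + 1 + 2 * (2 * k + 1) * y * x, k * (n + 1) + 1 - 2 * (2 * k + 1) * y * x,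
    by linarith, by linarith, ?_, by ring⟩
  obtain rfl : n = 4 * (2 * k + 1) * y ^ 2 - 1 := by linarith
  linear_combination (8 * (2 * k + 1) ^ 2 * y ^ 2) * hxy

theorem infinitely_many_n_for_delta_plus_two (δ : ℤ) (hpos : 0 < δ) (heven : Even δ) :
    ∀ N : ℤ, ∃ n : ℤ, N < n ∧ 0 < n ∧ Odd n ∧
      ∃ d1 d2 : ℤ, 1 < d1 ∧ 1 < d2 ∧ d1 ∣ (n ^ 2 + 1) / 2 ∧ d2 ∣ (n ^ 2 + 1) / 2 ∧
        d1 + d2 = δ * (n + 1) + 2 := by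
  obtain ⟨k, rfl⟩ := heven
  have hk : 0 < k := by omega
  let a₀ : Pell.Solution₁ (4 * k ^ 2 - 2) := .mk (4 * k ^ 2 - 1) (2 * k) (by ring)
  have ha₀ : 1 < a₀.x := by simp only [a₀, Pell.Solution₁.x_mk]; nlinarith
  intro N
  obtain ⟨a, hNy⟩ := Pell.Solution₁.exists_lt_y (Pell.Solution₁.d_pos_of_one_lt_x ha₀)
    (Pell.Solution₁.d_nonsquare_of_one_lt_x ha₀) (max N 0)
  have hy : 0 < a.y := lt_of_le_of_lt (le_max_right N 0) hNy
  obtain ⟨d₁, d₂, hd₁, hd₂, hprod, hsum⟩ :=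
    exists_factorization_of_sq_sub_mul_sq_eq_one hk hy a.prop (n := 4 * (2 * k + 1) * a.y ^ 2 - 1)
      (by ring)
  have hhalf : ((4 * (2 * k + 1) * a.y ^ 2 - 1) ^ 2 + 1) / 2 = d₁ * d₂ := by
    rw [hprod, Int.mul_ediv_cancel_left _ two_ne_zero]
  refine ⟨_, by nlinarith [le_max_left N 0], by nlinarith,
    ⟨2 * (2 * k + 1) * a.y ^ 2 - 1, by ring⟩, d₁, d₂, hd₁, hd₂,
    hhalf ▸ dvd_mul_right d₁ d₂, hhalf ▸ dvd_mul_left d₂ d₁,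
    by linear_combination hsum⟩
end

section
/- For every positive integer δ, if n = 4δ^3 + 4δ^2 - 1 then d1 = 2δ^2+2δ+1 and d2 = 4δ^4+4δ^3-2δ^2-2δ+1 are divisors of (n^2+1)/2 and satisfy d1 + d2 = δn + δ + 2. -/
theorem cubic_sq_add_one_eq_two_mul (δ : ℤ) :
    (4 * δ ^ 3 + 4 * δ ^ 2 - 1) ^ 2 + 1 =
      2 * ((2 * δ ^ 2 + 2 * δ + 1) * (4 * δ ^ 4 + 4 * δ ^ 3 - 2 * δ ^ 2 - 2 * δ + 1)) := by
  ring

theorem divisors_for_n_eq_cubic_general (δ : ℤ)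
    (n : ℤ) (hn : n = 4 * δ ^ 3 + 4 * δ ^ 2 - 1) :
    (2 * δ ^ 2 + 2 * δ + 1) ∣ (n ^ 2 + 1) / 2 ∧
    (4 * δ ^ 4 + 4 * δ ^ 3 - 2 * δ ^ 2 - 2 * δ + 1) ∣ (n ^ 2 + 1) / 2 ∧
    (2 * δ ^ 2 + 2 * δ + 1) + (4 * δ ^ 4 + 4 * δ ^ 3 - 2 * δ ^ 2 - 2 * δ + 1)
      = δ * n + δ + 2 := by
  subst hn
  rw [cubic_sq_add_one_eq_two_mul, Int.mul_ediv_cancel_left _ two_ne_zero]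
  exact ⟨dvd_mul_right _ _, dvd_mul_left _ _, by ring⟩

theorem divisors_for_n_eq_cubic (δ : ℤ) (hpos : 0 < δ)
    (n : ℤ) (hn : n = 4 * δ ^ 3 + 4 * δ ^ 2 - 1) :
    (2 * δ ^ 2 + 2 * δ + 1) ∣ (n ^ 2 + 1) / 2 ∧
    (4 * δ ^ 4 + 4 * δ ^ 3 - 2 * δ ^ 2 - 2 * δ + 1) ∣ (n ^ 2 + 1) / 2 ∧
    (2 * δ ^ 2 + 2 * δ + 1) + (4 * δ ^ 4 + 4 * δ ^ 3 - 2 * δ ^ 2 - 2 * δ + 1)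
      = δ * n + δ + 2 :=
  divisors_for_n_eq_cubic_general δ n hn
end

section
/- For every positive integer δ, if n = 8δ^5 + 8δ^4 - 8δ^3 - 8δ^2 + 2δ + 1 then d1 = 4δ^4+4δ^3-2δ^2-2δ+1 and d2 = 8δ^6+8δ^5-12δ^4-12δ^3+4δ^2+4δ+1 are divisors of (n^2+1)/2 and satisfy d1 + d2 = δn + δ + 2. -/
theorem quintic_sq_add_one_eq_two_mul (δ : ℤ) :
    (8 * δ ^ 5 + 8 * δ ^ 4 - 8 * δ ^ 3 - 8 * δ ^ 2 + 2 * δ + 1) ^ 2 + 1 =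
      2 * ((4 * δ ^ 4 + 4 * δ ^ 3 - 2 * δ ^ 2 - 2 * δ + 1) *
        (8 * δ ^ 6 + 8 * δ ^ 5 - 12 * δ ^ 4 - 12 * δ ^ 3 + 4 * δ ^ 2 + 4 * δ + 1)) := by
  ring

theorem divisors_for_n_eq_quintic_general (δ : ℤ)
    (n : ℤ) (hn : n = 8 * δ ^ 5 + 8 * δ ^ 4 - 8 * δ ^ 3 - 8 * δ ^ 2 + 2 * δ + 1) :
    (4 * δ ^ 4 + 4 * δ ^ 3 - 2 * δ ^ 2 - 2 * δ + 1) ∣ (n ^ 2 + 1) / 2 ∧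
    (8 * δ ^ 6 + 8 * δ ^ 5 - 12 * δ ^ 4 - 12 * δ ^ 3 + 4 * δ ^ 2 + 4 * δ + 1) ∣ (n ^ 2 + 1) / 2 ∧
    (4 * δ ^ 4 + 4 * δ ^ 3 - 2 * δ ^ 2 - 2 * δ + 1) +
      (8 * δ ^ 6 + 8 * δ ^ 5 - 12 * δ ^ 4 - 12 * δ ^ 3 + 4 * δ ^ 2 + 4 * δ + 1)
      = δ * n + δ + 2 := by
  rw [hn, quintic_sq_add_one_eq_two_mul, Int.mul_ediv_cancel_left _ two_ne_zero]
  exact ⟨dvd_mul_right _ _, dvd_mul_left _ _, by ring⟩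

theorem divisors_for_n_eq_quintic (δ : ℤ) (hpos : 0 < δ)
    (n : ℤ) (hn : n = 8 * δ ^ 5 + 8 * δ ^ 4 - 8 * δ ^ 3 - 8 * δ ^ 2 + 2 * δ + 1) :
    (4 * δ ^ 4 + 4 * δ ^ 3 - 2 * δ ^ 2 - 2 * δ + 1) ∣ (n ^ 2 + 1) / 2 ∧
    (8 * δ ^ 6 + 8 * δ ^ 5 - 12 * δ ^ 4 - 12 * δ ^ 3 + 4 * δ ^ 2 + 4 * δ + 1) ∣ (n ^ 2 + 1) / 2 ∧
    (4 * δ ^ 4 + 4 * δ ^ 3 - 2 * δ ^ 2 - 2 * δ + 1) +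
      (8 * δ ^ 6 + 8 * δ ^ 5 - 12 * δ ^ 4 - 12 * δ ^ 3 + 4 * δ ^ 2 + 4 * δ + 1)
      = δ * n + δ + 2 :=
  divisors_for_n_eq_quintic_general δ n hn
end

section
/- Let δ be an even positive integer and define U_0 = 1, U_1 = δ^2 - 1, U_{m+2} = 2(δ^2-1)U_{m+1} - U_m. Then for every m ≥ 1, n_m = (2(δ+1)U_m - δ(δ+2))/(δ^2 - 2) is an odd positive integer. -/
/-! Modulo `δ² - 2` the recurrence reads `U (m + 2) ≡ 2 U (m + 1) - U m` with `U 0 ≡ U 1 ≡ 1`,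
so `U m ≡ 1`. Writing `U m = (δ² - 2) t + 1`, the numerator is `(δ² - 2) (2 (δ + 1) t - 1)`, so
`n_m = 2 (δ + 1) t - 1` is odd. Since `U` is increasing, `U m ≥ U 1 = δ² - 1` for `m ≥ 1`,
which forces `t ≥ 1` and hence `n_m > 0`. -/

section SecondOrderRecurrence

variable {a : ℤ} {U : ℕ → ℤ}

theorem modEq_of_rec_of_modEq_two {d c : ℤ} (ha : a ≡ 2 [ZMOD d]) (h0 : U 0 ≡ c [ZMOD d])
    (h1 : U 1 ≡ c [ZMOD d]) (hrec : ∀ m, U (m + 2) = a * U (m + 1) - U m) (m : ℕ) :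
    U m ≡ c [ZMOD d] := by
  induction m using Nat.twoStepInduction with
  | zero => exact h0
  | one => exact h1
  | more m ih₀ ih₁ =>
    rw [hrec]
    calc a * U (m + 1) - U m ≡ 2 * c - c [ZMOD d] := (ha.mul ih₁).sub ih₀
      _ = c := by ring

theorem monotone_of_rec_of_two_le (ha : 2 ≤ a) (h0 : 0 ≤ U 0) (h01 : U 0 ≤ U 1)
    (hrec : ∀ m, U (m + 2) = a * U (m + 1) - U m) : Monotone U := by
  suffices h : ∀ m, 0 ≤ U m ∧ U m ≤ U (m + 1) from monotone_nat_of_le_succ fun m => (h m).2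
  intro m
  induction m with
  | zero => exact ⟨h0, h01⟩
  | succ m ih =>
    obtain ⟨hnonneg, hle⟩ := ih
    refine ⟨hnonneg.trans hle, ?_⟩
    rw [hrec]
    nlinarith [mul_nonneg (sub_nonneg.2 ha) (hnonneg.trans hle)]

end SecondOrderRecurrence

theorem n_m_odd_positive_integer (δ : ℤ) (hpos : 0 < δ) (heven : Even δ) (U : ℕ → ℤ)
    (h0 : U 0 = 1) (h1 : U 1 = δ ^ 2 - 1)
    (hrec : ∀ m : ℕ, U (m + 2) = 2 * (δ ^ 2 - 1) * U (m + 1) - U m) :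
    ∀ m : ℕ, 1 ≤ m →
      (δ ^ 2 - 2) ∣ (2 * (δ + 1) * U m - δ * (δ + 2)) ∧
      Odd ((2 * (δ + 1) * U m - δ * (δ + 2)) / (δ ^ 2 - 2)) ∧
      0 < (2 * (δ + 1) * U m - δ * (δ + 2)) / (δ ^ 2 - 2) := by
  intro m hm
  have hδ : 2 ≤ δ := by obtain ⟨c, rfl⟩ := heven; omega
  have hd : 0 < δ ^ 2 - 2 := by nlinarith
  have hmod : U m ≡ 1 [ZMOD δ ^ 2 - 2] :=
    modEq_of_rec_of_modEq_two (Int.modEq_iff_dvd.2 ⟨-2, by ring⟩) (by rw [h0])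
      (Int.modEq_iff_dvd.2 ⟨-1, by rw [h1]; ring⟩) hrec m
  obtain ⟨t, ht⟩ := hmod.symm.dvd
  have hnum : 2 * (δ + 1) * U m - δ * (δ + 2) = (δ ^ 2 - 2) * (2 * (δ + 1) * t - 1) := by
    rw [show U m = (δ ^ 2 - 2) * t + 1 by linarith]; ring
  have hU1 : U 1 ≤ U m :=
    monotone_of_rec_of_two_le (by nlinarith) (by rw [h0]; norm_num) (by rw [h0, h1]; nlinarith)
      hrec hm
  have ht1 : 1 ≤ t := by nlinarith
  rw [hnum, Int.mul_ediv_cancel_left _ hd.ne']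
  exact ⟨dvd_mul_right _ _, ⟨(δ + 1) * t - 1, by ring⟩, by nlinarith⟩
end

section
/- Let δ ≥ 2 be an integer and define U_0 = 1, U_1 = δ^2 - 1, U_{m+2} = 2(δ^2-1)U_{m+1} - U_m. Then for all m ≥ 1: δ^4 - 2δ^2(U_m U_{m-1} + 1) + (U_m + U_{m-1})^2 = 0. -/
/-!
The left-hand side is `δ⁴ - 2δ² + Q(U (m+1), U m)` with `Q(x, y) = x² - 2(δ² - 1)xy + y²`.
The step `(x, y) ↦ (2(δ² - 1)x - y, x)` of the recurrence preserves `Q` (a Cassini-type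
identity), so `Q` keeps its initial value `Q(δ² - 1, 1) = 2δ² - δ⁴`.
-/

theorem sq_sub_mul_add_sq_eq_of_rec {R : Type*} [CommRing R] (c : R) (U : ℕ → R)
    (hrec : ∀ m : ℕ, U (m + 2) = c * U (m + 1) - U m) (m : ℕ) :
    U (m + 1) ^ 2 - c * U (m + 1) * U m + U m ^ 2 = U 1 ^ 2 - c * U 1 * U 0 + U 0 ^ 2 := by
  induction m with
  | zero => rfl
  | succ n ih => rw [hrec n]; linear_combination ih

theorem U_identity_general (δ : ℤ) (U : ℕ → ℤ)
    (h0 : U 0 = 1) (h1 : U 1 = δ ^ 2 - 1)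
    (hrec : ∀ m : ℕ, U (m + 2) = 2 * (δ ^ 2 - 1) * U (m + 1) - U m) :
    ∀ m : ℕ, δ ^ 4 - 2 * δ ^ 2 * (U (m + 1) * U m + 1) + (U (m + 1) + U m) ^ 2 = 0 := by
  intro m
  have key := sq_sub_mul_add_sq_eq_of_rec _ U hrec m
  rw [h0, h1] at key
  linear_combination key

theorem U_identity (δ : ℤ) (hδ : 2 ≤ δ) (U : ℕ → ℤ)
    (h0 : U 0 = 1) (h1 : U 1 = δ ^ 2 - 1)
    (hrec : ∀ m : ℕ, U (m + 2) = 2 * (δ ^ 2 - 1) * U (m + 1) - U m) :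
    ∀ m : ℕ, δ ^ 4 - 2 * δ ^ 2 * (U (m + 1) * U m + 1) + (U (m + 1) + U m) ^ 2 = 0 :=
  U_identity_general δ U h0 h1 hrec
end

section
/- Suppose δ and ε are even integers, n is odd, and d1, d2 are positive divisors of (n^2+1)/2 with d1 + d2 = δn + ε. Let g = gcd(d1, d2). Then g ≡ 1 (mod 4) and g divides (δ^2 + ε^2)/4. -/
/-!
`g` divides `n ^ 2 + 1`, so `-1` is a square modulo every prime factor `p` of `g`, forcing
`p ≡ 1 (mod 4)` since `g` is odd (as `(n ^ 2 + 1) / 2` is); hence `g ≡ 1 (mod 4)`.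
As `g` also divides `δ n + ε`, it divides
`δ ^ 2 (n ^ 2 + 1) - (δ n + ε)(δ n - ε) = δ ^ 2 + ε ^ 2`, and being odd it divides a quarter of it.
-/

theorem Nat.mod_four_eq_one_of_odd_of_isSquare_neg_one {d : ℕ} (hd : Odd d)
    (hs : IsSquare (-1 : ZMod d)) : d % 4 = 1 := by
  induction d using induction_on_primes with
  | zero => exact absurd hd (by decide)
  | one => rfl
  | prime_mul p q hp ih =>
    have : Fact p.Prime := ⟨hp⟩
    have hp_odd : Odd p := hd.of_dvd_nat (dvd_mul_right p q)
    have hp3 : p % 4 ≠ 3 :=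
      ZMod.exists_sq_eq_neg_one_iff.mp (ZMod.isSquare_neg_one_of_dvd (dvd_mul_right p q) hs)
    have hq1 : q % 4 = 1 :=
      ih (hd.of_dvd_nat (dvd_mul_left q p)) (ZMod.isSquare_neg_one_of_dvd (dvd_mul_left q p) hs)
    have hp1 : p % 4 = 1 := by rw [Nat.odd_iff] at hp_odd; omega
    rw [Nat.mul_mod, hp1, hq1]

theorem ZMod.isSquare_neg_one_of_dvd_sq_add_one {d : ℕ} {n : ℤ} (h : (d : ℤ) ∣ n ^ 2 + 1) :
    IsSquare (-1 : ZMod d) := by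
  refine ⟨n, ?_⟩
  have hn := (ZMod.intCast_zmod_eq_zero_iff_dvd _ d).mpr h
  push_cast at hn
  linear_combination -hn

theorem Int.odd_sq_add_one_div_two {n : ℤ} (hn : Odd n) : Odd ((n ^ 2 + 1) / 2) := by
  have := Int.sq_mod_four_eq_one_of_odd hn
  rw [Int.odd_iff]
  omega

theorem Int.dvd_sq_add_sq_of_dvd_sq_add_one {g a b n : ℤ} (hn : g ∣ n ^ 2 + 1)
    (hab : g ∣ a * n + b) : g ∣ a ^ 2 + b ^ 2 := by
  have h : a ^ 2 + b ^ 2 = a ^ 2 * (n ^ 2 + 1) - (a * n + b) * (a * n - b) := by ring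
  rw [h]
  exact dvd_sub (hn.mul_left _) (hab.mul_right _)

theorem Int.dvd_ediv_four_of_odd {g x : ℤ} (hg : Odd g) (hx : g ∣ x) (h4 : 4 ∣ x) :
    g ∣ x / 4 := by
  obtain ⟨y, rfl⟩ := h4
  have hg4 : IsCoprime g 4 := by
    simpa using (Int.isCoprime_two_right.mpr hg).pow_right (n := 2)
  rw [Int.mul_ediv_cancel_left _ four_ne_zero]
  exact hg4.dvd_of_dvd_mul_left hx

theorem gcd_properties_general (δ ε n d1 d2 : ℤ) (hδ : Even δ) (hε : Even ε) (hn : Odd n)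
    (hdvd1 : d1 ∣ (n ^ 2 + 1) / 2)
    (hsum : d1 + d2 = δ * n + ε) :
    (Int.gcd d1 d2 : ℤ) ≡ 1 [ZMOD 4] ∧ (Int.gcd d1 d2 : ℤ) ∣ (δ ^ 2 + ε ^ 2) / 4 := by
  set g := Int.gcd d1 d2
  have hg_half : (g : ℤ) ∣ (n ^ 2 + 1) / 2 := (Int.gcd_dvd_left d1 d2).trans hdvd1
  have hg_odd : Odd (g : ℤ) :=
    Int.not_even_iff_odd.mp fun h ↦
      Int.not_even_iff_odd.mpr (Int.odd_sq_add_one_div_two hn) (hg_half.even h)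
  have hg_sq : (g : ℤ) ∣ n ^ 2 + 1 :=
    hg_half.trans (Dvd.intro_left 2 (Int.mul_ediv_cancel' hn.pow.add_one.two_dvd))
  have hg_lin : (g : ℤ) ∣ δ * n + ε :=
    hsum ▸ dvd_add (Int.gcd_dvd_left d1 d2) (Int.gcd_dvd_right d1 d2)
  have hg_mod : g % 4 = 1 :=
    Nat.mod_four_eq_one_of_odd_of_isSquare_neg_one (Int.odd_coe_nat g |>.mp hg_odd)
      (ZMod.isSquare_neg_one_of_dvd_sq_add_one hg_sq)
  have h4 : (4 : ℤ) ∣ δ ^ 2 + ε ^ 2 :=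
    dvd_add (pow_dvd_pow_of_dvd hδ.two_dvd 2) (pow_dvd_pow_of_dvd hε.two_dvd 2)
  constructor
  · show (g : ℤ) % 4 = 1 % 4
    omega
  · exact Int.dvd_ediv_four_of_odd hg_odd (Int.dvd_sq_add_sq_of_dvd_sq_add_one hg_sq hg_lin) h4

theorem gcd_properties (δ ε n d1 d2 : ℤ) (hδ : Even δ) (hε : Even ε) (hn : Odd n)
    (hd1 : 0 < d1) (hd2 : 0 < d2)
    (hdvd1 : d1 ∣ (n ^ 2 + 1) / 2) (hdvd2 : d2 ∣ (n ^ 2 + 1) / 2)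
    (hsum : d1 + d2 = δ * n + ε) :
    (Int.gcd d1 d2 : ℤ) ≡ 1 [ZMOD 4] ∧ (Int.gcd d1 d2 : ℤ) ∣ (δ ^ 2 + ε ^ 2) / 4 :=
  gcd_properties_general δ ε n d1 d2 hδ hε hn hdvd1 hsum
end
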